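/- arXiv:2209.13034 — 2 statements merged into one kernel-verified Lean document; each statement's English description precedes it below -/
import Mathlib

section
/- Let G=(V,E) be a hypergraph, let e_0 ∈ E, let T be a finite index set of distinct edges e_k ∈ E \ {e_0} (k ∈ T) adjacent to e_0, and let i ∈ T be such that (e_0 ∩ e_i) \ ∪_{j∈T\{i}} (e_0 ∩ e_j) = {v̄} for a single vertex v̄. If a point z ∈ ℝ^{V∪E} satisfies z_{e_i} ≤ z_{v̄} and the extended flower inequality centered at e_0 with neighbors e_k, k ∈ T \ {i}, then z satisfies the extended flower inequality centered at e_0 with neighbors e_k, k ∈ T. -/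
open Finset

/-- A hypergraph: a finite set of nodes together with a set of edges,
each a subset of the nodes of cardinality at least two. -/
structure Hypergraph' (α : Type*) [DecidableEq α] where
  V : Finset α
  E : Finset (Finset α)
  edge_sub : ∀ e ∈ E, e ⊆ V
  edge_card : ∀ e ∈ E, 2 ≤ e.card

section Defs

variable {α : Type*} [DecidableEq α]

/-- Membership in the multilinear set `S_G`; a point is encoded as a single function
`z : Finset α → ℝ`, with node variables `z {v}` and edge variables `z e`. -/
def MultilinearSet (G : Hypergraph' α) (z : Finset α → ℝ) : Prop :=
  (∀ v ∈ G.V, z {v} = 0 ∨ z {v} = 1) ∧ ∀ e ∈ G.E, z e = ∏ v ∈ e, z {v}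

/-- Membership in the standard linearization `MP^LP_G`. -/
def StdLin (G : Hypergraph' α) (z : Finset α → ℝ) : Prop :=
  (∀ v ∈ G.V, z {v} ≤ 1) ∧
    ∀ e ∈ G.E, 0 ≤ z e ∧ (∑ v ∈ e, z {v}) - (e.card : ℝ) + 1 ≤ z e ∧ ∀ v ∈ e, z e ≤ z {v}

/-- The (extended) flower inequality centered at `e₀` with set of neighbors `T`. -/
def ExtFlowerIneq (z : Finset α → ℝ) (e₀ : Finset α) (T : Finset (Finset α)) : Prop :=
  (∑ v ∈ e₀ \ T.biUnion id, z {v}) + (∑ e ∈ T, z e) - z e₀ ≤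
    ((e₀ \ T.biUnion id).card : ℝ) + (T.card : ℝ) - 1

/-- `T` is a valid set of neighbors for an extended flower inequality centered at `e₀`:
a nonempty set of edges, distinct from `e₀`, adjacent to `e₀`, with `γ_i ≥ 2` for all `i ∈ T`. -/
def ValidEFNeighbors (G : Hypergraph' α) (e₀ : Finset α) (T : Finset (Finset α)) : Prop :=
  T.Nonempty ∧ (∀ e ∈ T, e ∈ G.E ∧ e ≠ e₀ ∧ (e ∩ e₀).Nonempty) ∧
    ∀ i ∈ T, 2 ≤ ((e₀ ∩ i) \ (T.erase i).biUnion (fun j => e₀ ∩ j)).card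

/-- Membership in the extended flower relaxation `MP^EF_G`. -/
def MPEF (G : Hypergraph' α) (z : Finset α → ℝ) : Prop :=
  StdLin G z ∧ ∀ e₀ ∈ G.E, ∀ T : Finset (Finset α), ValidEFNeighbors G e₀ T → ExtFlowerIneq z e₀ T

/-- `T` is a valid set of neighbors for a flower inequality centered at `e₀`. -/
def ValidFlowerNeighbors (G : Hypergraph' α) (e₀ : Finset α) (T : Finset (Finset α)) : Prop :=
  T.Nonempty ∧ (∀ e ∈ T, e ∈ G.E ∧ e ≠ e₀ ∧ 2 ≤ (e₀ ∩ e).card) ∧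
    ∀ i ∈ T, ∀ j ∈ T, i ≠ j → e₀ ∩ i ∩ j = ∅

/-- Membership in the flower relaxation `MP^F_G`. -/
def MPF (G : Hypergraph' α) (z : Finset α → ℝ) : Prop :=
  StdLin G z ∧ ∀ e₀ ∈ G.E, ∀ T : Finset (Finset α), ValidFlowerNeighbors G e₀ T → ExtFlowerIneq z e₀ T

/-- A recursive McCormick relaxation (RMC) of the multilinear set `S_G`:
a set `Ebar` of artificial edges together with, for each `f ∈ E ∪ Ebar`,
a partition `f = J f ∪ K f` into two disjoint nonempty parts, each a singleton
or an element of `E ∪ Ebar`, such that every artificial edge is reachable from some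
edge of `E` by iteratively passing to non-singleton parts. -/
structure RMC {α : Type*} [DecidableEq α] (G : Hypergraph' α) where
  Ebar : Finset (Finset α)
  ebar_sub : ∀ f ∈ Ebar, f ⊆ G.V
  ebar_card : ∀ f ∈ Ebar, 2 ≤ f.card
  ebar_new : ∀ f ∈ Ebar, f ∉ G.E
  J : Finset α → Finset α
  K : Finset α → Finset α
  union_eq : ∀ f ∈ G.E ∪ Ebar, J f ∪ K f = f
  disj : ∀ f ∈ G.E ∪ Ebar, Disjoint (J f) (K f)
  J_ne : ∀ f ∈ G.E ∪ Ebar, (J f).Nonempty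
  K_ne : ∀ f ∈ G.E ∪ Ebar, (K f).Nonempty
  J_mem : ∀ f ∈ G.E ∪ Ebar, (J f).card = 1 ∨ J f ∈ G.E ∪ Ebar
  K_mem : ∀ f ∈ G.E ∪ Ebar, (K f).card = 1 ∨ K f ∈ G.E ∪ Ebar
  reach : ∀ f ∈ Ebar, ∃ e ∈ G.E, Relation.ReflTransGen
    (fun a b => a ∈ G.E ∪ Ebar ∧ 2 ≤ b.card ∧ (b = J a ∨ b = K a)) e f

/-- One step of the recursive decomposition: passing from `a` to a non-singleton part of it. -/
def RMC.step {α : Type*} [DecidableEq α] {G : Hypergraph' α} (M : RMC G) (a b : Finset α) : Prop :=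
  a ∈ G.E ∪ M.Ebar ∧ 2 ≤ b.card ∧ (b = M.J a ∨ b = M.K a)

/-- The recursive sequence `R_e` of `e`: all sets obtained from `e` by iteratively
passing to non-singleton parts of the partitions (with `e ∈ R_e`). -/
def RMC.Rseq {α : Type*} [DecidableEq α] {G : Hypergraph' α} (M : RMC G) (e : Finset α) :
    Set (Finset α) :=
  {f | Relation.ReflTransGen M.step e f}

/-- The RMC is non-overlapping if the recursive sequences of distinct edges are disjoint. -/
def RMC.NonOverlapping {α : Type*} [DecidableEq α] {G : Hypergraph' α} (M : RMC G) : Prop :=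
  ∀ e ∈ G.E, ∀ e' ∈ G.E, e ≠ e' → M.Rseq e ∩ M.Rseq e' = ∅

/-- The point `w` (including artificial coordinates) satisfies all McCormick
inequalities of the RMC. -/
def RMC.McCormick {α : Type*} [DecidableEq α] {G : Hypergraph' α} (M : RMC G)
    (w : Finset α → ℝ) : Prop :=
  ∀ f ∈ G.E ∪ M.Ebar,
    0 ≤ w f ∧ w (M.J f) + w (M.K f) - 1 ≤ w f ∧ w f ≤ w (M.J f) ∧ w f ≤ w (M.K f)

/-- Membership in `MP^RMC_G`, the projection of the RMC polytope onto the coordinates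
indexed by `V ∪ E`: the point `z` admits an extension to the artificial variables
satisfying all McCormick inequalities of the RMC. -/
def RMC.MPRMC {α : Type*} [DecidableEq α] {G : Hypergraph' α} (M : RMC G)
    (z : Finset α → ℝ) : Prop :=
  ∃ w : Finset α → ℝ, (∀ v ∈ G.V, w {v} = z {v}) ∧ (∀ e ∈ G.E, w e = z e) ∧ M.McCormick w

/-- A flower partition `Te` of the edge `e`: a partition of `e` into pairwise disjoint
nonempty parts, each a singleton subset of `e` or an element of `R_e`, such that every
part lying in `Ebar` belongs to the recursive sequence of some other original edge. -/
def RMC.FlowerPartition {α : Type*} [DecidableEq α] {G : Hypergraph' α} (M : RMC G)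
    (e : Finset α) (Te : Finset (Finset α)) : Prop :=
  (∀ p ∈ Te, p.Nonempty) ∧
  (∀ p ∈ Te, ∀ q ∈ Te, p ≠ q → Disjoint p q) ∧
  Te.biUnion id = e ∧
  (∀ p ∈ Te, (p.card = 1 ∧ p ⊆ e) ∨ p ∈ M.Rseq e) ∧
  ∀ p ∈ Te, p ∈ M.Ebar → ∃ e' ∈ G.E, e' ≠ e ∧ p ∈ M.Rseq e'

/-- The McCormick system for the bilinear equation `w = u * v` over the unit hypercube. -/
def McSys (u v w : ℝ) : Prop := 0 ≤ w ∧ u + v - 1 ≤ w ∧ w ≤ u ∧ w ≤ v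

end Defs


/-! Removing `i` from `T` uncovers exactly the private vertex `v̄` of `i`, so the flower
inequality for `T` is the one for `T \ {i}` with the term `z_{v̄}` traded for `z_{e_i} ≤ z_{v̄}`. -/

theorem sdiff_biUnion_erase_eq_union {α : Type*} [DecidableEq α] (e₀ i : Finset α)
    {T : Finset (Finset α)} (hi : i ∈ T) :
    e₀ \ (T.erase i).biUnion id =
      (e₀ \ T.biUnion id) ∪ (e₀ ∩ i) \ (T.erase i).biUnion (fun j => e₀ ∩ j) := by
  rw [← insert_erase hi]
  ext x
  simp only [mem_sdiff, mem_union, mem_inter, mem_biUnion, biUnion_insert, id_eq,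
    erase_insert_eq_erase, mem_erase]
  grind

theorem extFlowerIneq_of_erase {α : Type*} [DecidableEq α] {z : Finset α → ℝ}
    {e₀ i : Finset α} {T : Finset (Finset α)} (hi : i ∈ T) {v : α} (hvi : v ∈ i)
    (hcover : e₀ \ (T.erase i).biUnion id = insert v (e₀ \ T.biUnion id))
    (hzi : z i ≤ z {v}) (hEF : ExtFlowerIneq z e₀ (T.erase i)) :
    ExtFlowerIneq z e₀ T := by
  have hv : v ∉ e₀ \ T.biUnion id := fun h =>
    (mem_sdiff.mp h).2 (mem_biUnion.mpr ⟨i, hi, hvi⟩)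
  unfold ExtFlowerIneq at hEF ⊢
  rw [hcover, sum_insert hv, card_insert_of_notMem hv] at hEF
  rw [← add_sum_erase T z hi, ← card_erase_add_one hi]
  push_cast at hEF ⊢
  linarith

theorem extended_flower_gamma_one_general {α : Type*} [DecidableEq α]
    (e₀ : Finset α)
    (T : Finset (Finset α))
    (i : Finset α) (hi : i ∈ T) (vbar : α)
    (hγ : (e₀ ∩ i) \ (T.erase i).biUnion (fun j => e₀ ∩ j) = {vbar})
    (z : Finset α → ℝ) (hzi : z i ≤ z {vbar})
    (hEF : ExtFlowerIneq z e₀ (T.erase i)) :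
    ExtFlowerIneq z e₀ T := by
  have hvbar : vbar ∈ i := (mem_inter.mp (mem_sdiff.mp (hγ ▸ mem_singleton_self vbar)).1).2
  refine extFlowerIneq_of_erase hi hvbar ?_ hzi hEF
  rw [sdiff_biUnion_erase_eq_union e₀ i hi, hγ, union_comm, ← insert_eq]

/-- if `γ_i = 1` for some `i ∈ T`, with private vertex `vbar`, then the extended
flower inequality with neighbors `T` is implied by `z_{e_i} ≤ z_{vbar}` together with the
extended flower inequality with neighbors `T \ {i}`. -/
theorem extended_flower_gamma_one {α : Type*} [DecidableEq α]
    (G : Hypergraph' α) (e₀ : Finset α) (he₀ : e₀ ∈ G.E)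
    (T : Finset (Finset α))
    (hTE : ∀ e ∈ T, e ∈ G.E ∧ e ≠ e₀)
    (hadj : ∀ e ∈ T, (e ∩ e₀).Nonempty)
    (i : Finset α) (hi : i ∈ T) (vbar : α)
    (hγ : (e₀ ∩ i) \ (T.erase i).biUnion (fun j => e₀ ∩ j) = {vbar})
    (z : Finset α → ℝ) (hzi : z i ≤ z {vbar})
    (hEF : ExtFlowerIneq z e₀ (T.erase i)) :
    ExtFlowerIneq z e₀ T :=
  extended_flower_gamma_one_general e₀ T i hi vbar hγ z hzi hEF
end

section
/- Let G=(V,E) be a hypergraph and consider any recursive McCormick relaxation of the multilinear set S_G. Then MP^EF_G ⊆ MP^RMC_G; that is, every point of the extended flower relaxation admits an extension to the artificial variables satisfying all McCormick inequalities of the RMC. -/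
open Finset

/-!
For `S ⊆ V` and `T ⊆ E` whose union covers a set `g`, the affine function
`1 + ∑_{v ∈ S} (z_v - 1) + ∑_{e ∈ T} (z_e - 1)` underestimates `∏_{v ∈ g} z_v` on `S_G`.
Extend `z` to every artificial edge `g` by the largest of these bounds (and `0`). Using only
`z ≤ 1`, this extension satisfies the McCormick inequalities for every split `f = J ∪ K`:
a cover of `f` covers `J` and `K`, and covers of `J` and `K` unite to a cover of `f`.
The extended flower inequalities are exactly what makes the extension agree with `z` on the
original edges: after discarding redundant parts and trading every neighbor with `γ_i ≤ 1` for
its at most one private node, a cover of `e ∈ E` becomes an extended flower inequality at `e`.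
-/

namespace Hypergraph'

variable {α : Type*} [DecidableEq α] {G : Hypergraph' α} {z : Finset α → ℝ}

lemma le_one_of_mem_edges (hz : StdLin G z) {e : Finset α} (he : e ∈ G.E) : z e ≤ 1 := by
  obtain ⟨v, hv⟩ : e.Nonempty := Finset.card_pos.mp (by have := G.edge_card e he; omega)
  exact ((hz.2 e he).2.2 v hv).trans (hz.1 v (G.edge_sub e he hv))

end Hypergraph'

section Certificates

variable {α : Type*}

/-- On `S_G`, `∏_{v ∈ S} z_v ∏_{e ∈ T} z_e ≥ certBound z S T` since all factors lie in
`[0, 1]`. -/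
def certBound (z : Finset α → ℝ) (S : Finset α) (T : Finset (Finset α)) : ℝ :=
  1 + ∑ v ∈ S, (z {v} - 1) + ∑ e ∈ T, (z e - 1)

@[simp]
lemma certBound_singleton_empty (z : Finset α → ℝ) (v : α) : certBound z {v} ∅ = z {v} := by
  simp [certBound]

@[simp]
lemma certBound_empty_singleton (z : Finset α → ℝ) (e : Finset α) :
    certBound z ∅ {e} = z e := by
  simp [certBound]

lemma certBound_eq (z : Finset α → ℝ) (S : Finset α) (T : Finset (Finset α)) :
    certBound z S T =
      (∑ v ∈ S, z {v}) + (∑ e ∈ T, z e) - (S.card : ℝ) - (T.card : ℝ) + 1 := by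
  simp only [certBound, Finset.sum_sub_distrib, Finset.sum_const, nsmul_eq_mul, mul_one]
  ring

variable [DecidableEq α] {G : Hypergraph' α} {z : Finset α → ℝ}

lemma certBound_anti (hz : StdLin G z) {S S' : Finset α} {T T' : Finset (Finset α)}
    (hS : S ⊆ G.V) (hT : T ⊆ G.E) (hS' : S' ⊆ S) (hT' : T' ⊆ T) :
    certBound z S T ≤ certBound z S' T' := by
  have hV : ∑ v ∈ S, (z {v} - 1) ≤ ∑ v ∈ S', (z {v} - 1) :=
    Finset.sum_le_sum_of_subset_of_nonpos' hS' fun v hv _ => by linarith [hz.1 v (hS hv)]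
  have hE : ∑ e ∈ T, (z e - 1) ≤ ∑ e ∈ T', (z e - 1) :=
    Finset.sum_le_sum_of_subset_of_nonpos' hT' fun e he _ => by
      linarith [Hypergraph'.le_one_of_mem_edges hz (hT he)]
  simp only [certBound]
  linarith

lemma certBound_le_one (hz : StdLin G z) {S : Finset α} {T : Finset (Finset α)}
    (hS : S ⊆ G.V) (hT : T ⊆ G.E) : certBound z S T ≤ 1 := by
  simpa [certBound] using certBound_anti hz hS hT (Finset.empty_subset S) (Finset.empty_subset T)

lemma certBound_union (hz : StdLin G z) {S S' : Finset α} {T T' : Finset (Finset α)}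
    (hS : S ⊆ G.V) (hT : T ⊆ G.E) :
    certBound z S T + certBound z S' T' - 1 ≤ certBound z (S ∪ S') (T ∪ T') := by
  have hV := Finset.sum_union_inter (s₁ := S) (s₂ := S') (f := fun v => z {v} - 1)
  have hE := Finset.sum_union_inter (s₁ := T) (s₂ := T') (f := fun e => z e - 1)
  have hV' : ∑ v ∈ S ∩ S', (z {v} - 1) ≤ 0 :=
    Finset.sum_nonpos fun v hv => by linarith [hz.1 v (hS (Finset.mem_inter.mp hv).1)]
  have hE' : ∑ e ∈ T ∩ T', (z e - 1) ≤ 0 :=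
    Finset.sum_nonpos fun e he => by
      linarith [Hypergraph'.le_one_of_mem_edges hz (hT (Finset.mem_inter.mp he).1)]
  simp only [certBound]
  linarith

/-- `z_i ≤ 1` handles the case `S' = S`, and `z_i ≤ z_u` the case `S' \ S = {u}`. -/
lemma certBound_le_erase (hz : StdLin G z) {S S' : Finset α} {T : Finset (Finset α)}
    {i : Finset α} (hT : T ⊆ G.E) (hi : i ∈ T) (hSS' : S ⊆ S')
    (hnew : S' \ S ⊆ i) (hcard : (S' \ S).card ≤ 1) :
    certBound z S T ≤ certBound z S' (T.erase i) := by
  have hV := Finset.sum_sdiff hSS' (f := fun v => z {v} - 1)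
  have hE := Finset.add_sum_erase T (fun e => z e - 1) hi
  have hnew_le : z i - 1 ≤ ∑ v ∈ S' \ S, (z {v} - 1) := by
    rcases Nat.le_one_iff_eq_zero_or_eq_one.mp hcard with h0 | h1
    · simp [Finset.card_eq_zero.mp h0, Hypergraph'.le_one_of_mem_edges hz (hT hi)]
    · obtain ⟨u, hu⟩ := Finset.card_eq_one.mp h1
      have hui : u ∈ i := hnew (by simp [hu])
      simpa [hu] using (hz.2 i (hT hi)).2.2 u hui
  simp only [certBound]
  linarith

end Certificates

section Flower

variable {α : Type*} [DecidableEq α] {G : Hypergraph' α} {z : Finset α → ℝ}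

lemma extFlowerIneq_iff (z : Finset α → ℝ) (e : Finset α) (T : Finset (Finset α)) :
    ExtFlowerIneq z e T ↔ certBound z (e \ T.biUnion id) T ≤ z e := by
  rw [ExtFlowerIneq, certBound_eq]
  constructor <;> intro h <;> linarith

lemma validEFNeighbors_of_two_le {e : Finset α} {T : Finset (Finset α)} (hT : T ⊆ G.E)
    (hTne : T.Nonempty) (heT : e ∉ T)
    (hγ : ∀ i ∈ T, 2 ≤ ((e ∩ i) \ (T.erase i).biUnion (fun j => e ∩ j)).card) :
    ValidEFNeighbors G e T := by
  refine ⟨hTne, fun i hi => ⟨hT hi, ne_of_mem_of_not_mem hi heT, ?_⟩, hγ⟩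
  obtain ⟨x, hx⟩ := Finset.card_pos.mp (lt_of_lt_of_le two_pos (hγ i hi))
  rw [Finset.inter_comm]
  exact ⟨x, (Finset.mem_sdiff.mp hx).1⟩

/-- Induction on `T`: a neighbor with `γ_i ≤ 1` is traded for its at most one private node
(`certBound_le_erase`); when no such neighbor is left, this is an extended flower inequality. -/
lemma certBound_sdiff_biUnion_le (hz : MPEF G z) {e : Finset α} (he : e ∈ G.E)
    (T : Finset (Finset α)) (hT : T ⊆ G.E) (heT : e ∉ T) :
    certBound z (e \ T.biUnion id) T ≤ z e := by
  induction T using Finset.strongInduction with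
  | H T ih =>
  rcases T.eq_empty_or_nonempty with rfl | hTne
  · simpa [certBound_eq] using (hz.1.2 e he).2.1
  by_cases hγ : ∀ i ∈ T, 2 ≤ ((e ∩ i) \ (T.erase i).biUnion (fun j => e ∩ j)).card
  · exact (extFlowerIneq_iff z e T).mp
      (hz.2 e he T (validEFNeighbors_of_two_le hT hTne heT hγ))
  push Not at hγ
  obtain ⟨i, hi, hγi⟩ := hγ
  have hsub : (e \ (T.erase i).biUnion id) \ (e \ T.biUnion id) ⊆
      (e ∩ i) \ (T.erase i).biUnion (fun j => e ∩ j) := by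
    intro x hx
    simp only [Finset.mem_sdiff, Finset.mem_biUnion, Finset.mem_erase, id, not_exists,
      not_and, not_forall, not_not, Finset.mem_inter] at hx ⊢
    obtain ⟨⟨hxe, hxT'⟩, hxT⟩ := hx
    obtain ⟨j, hj, hxj⟩ := hxT hxe
    have hji : j = i := by_contra fun h => hxT' j ⟨h, hj⟩ hxj
    exact ⟨⟨hxe, hji ▸ hxj⟩, fun k hk _ => hxT' k hk⟩
  calc certBound z (e \ T.biUnion id) T
      ≤ certBound z (e \ (T.erase i).biUnion id) (T.erase i) :=
        certBound_le_erase hz.1 hT hi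
          (Finset.sdiff_subset_sdiff le_rfl
            (Finset.biUnion_subset_biUnion_of_subset_left _ (Finset.erase_subset i T)))
          (fun x hx => (Finset.mem_inter.mp (Finset.mem_sdiff.mp (hsub hx)).1).2)
          ((Finset.card_le_card hsub).trans (Nat.lt_succ_iff.mp hγi))
    _ ≤ z e := ih _ (Finset.erase_ssubset hi) ((Finset.erase_subset i T).trans hT)
        fun h => heT (Finset.mem_of_mem_erase h)

lemma certBound_le_of_subset_cover (hz : MPEF G z) {e S : Finset α} {T : Finset (Finset α)}
    (he : e ∈ G.E) (hS : S ⊆ G.V) (hT : T ⊆ G.E) (hcov : e ⊆ S ∪ T.biUnion id) :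
    certBound z S T ≤ z e := by
  by_cases heT : e ∈ T
  · simpa using certBound_anti hz.1 hS hT (Finset.empty_subset S)
      (Finset.singleton_subset_iff.mpr heT)
  · refine (certBound_anti hz.1 hS hT ?_ subset_rfl).trans
      (certBound_sdiff_biUnion_le hz he T hT heT)
    intro x hx
    obtain ⟨hxe, hxT⟩ := Finset.mem_sdiff.mp hx
    exact (Finset.mem_union.mp (hcov hxe)).resolve_right hxT

end Flower

section CoverSup

variable {α : Type*} [DecidableEq α] {G : Hypergraph' α} {z : Finset α → ℝ}

def covers (G : Hypergraph' α) (g : Finset α) : Finset (Finset α × Finset (Finset α)) :=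
  (G.V.powerset ×ˢ G.E.powerset).filter fun p => g ⊆ p.1 ∪ p.2.biUnion id

lemma mem_covers {g : Finset α} {p : Finset α × Finset (Finset α)} :
    p ∈ covers G g ↔ p.1 ⊆ G.V ∧ p.2 ⊆ G.E ∧ g ⊆ p.1 ∪ p.2.biUnion id := by
  simp [covers, and_assoc]

def coverSup (G : Hypergraph' α) (z : Finset α → ℝ) (g : Finset α) : ℝ :=
  (covers G g).fold max 0 fun p => certBound z p.1 p.2

lemma coverSup_nonneg (g : Finset α) : 0 ≤ coverSup G z g :=
  (Finset.le_fold_max _).mpr (Or.inl le_rfl)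

lemma certBound_le_coverSup {g S : Finset α} {T : Finset (Finset α)} (hS : S ⊆ G.V)
    (hT : T ⊆ G.E) (hcov : g ⊆ S ∪ T.biUnion id) : certBound z S T ≤ coverSup G z g :=
  (Finset.le_fold_max _).mpr (Or.inr ⟨(S, T), mem_covers.mpr ⟨hS, hT, hcov⟩, le_rfl⟩)

lemma coverSup_le {g : Finset α} {c : ℝ} (hc : 0 ≤ c)
    (h : ∀ S T, S ⊆ G.V → T ⊆ G.E → g ⊆ S ∪ T.biUnion id → certBound z S T ≤ c) :
    coverSup G z g ≤ c :=
  (Finset.fold_max_le _).mpr ⟨hc, fun p hp => h p.1 p.2 (mem_covers.mp hp).1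
    (mem_covers.mp hp).2.1 (mem_covers.mp hp).2.2⟩

lemma coverSup_anti {g h : Finset α} (hgh : g ⊆ h) : coverSup G z h ≤ coverSup G z g :=
  coverSup_le (coverSup_nonneg g) fun _ _ hS hT hcov =>
    certBound_le_coverSup hS hT (hgh.trans hcov)

lemma coverSup_le_one (hz : StdLin G z) (g : Finset α) : coverSup G z g ≤ 1 :=
  coverSup_le zero_le_one fun _ _ hS hT _ => certBound_le_one hz hS hT

lemma coverSup_add_sub_one_le (hz : StdLin G z) (J K : Finset α) :
    coverSup G z J + coverSup G z K - 1 ≤ coverSup G z (J ∪ K) := by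
  suffices h : coverSup G z J ≤ coverSup G z (J ∪ K) + 1 - coverSup G z K by linarith
  have h0 : 0 ≤ coverSup G z (J ∪ K) := coverSup_nonneg (J ∪ K)
  refine coverSup_le (by linarith [coverSup_le_one hz K]) fun S T hS hT hJ => ?_
  suffices h : coverSup G z K ≤ coverSup G z (J ∪ K) + 1 - certBound z S T by linarith
  refine coverSup_le (by linarith [certBound_le_one hz hS hT]) fun S' T' hS' hT' hK => ?_
  have hcov : J ∪ K ⊆ (S ∪ S') ∪ (T ∪ T').biUnion id := by
    rw [Finset.union_biUnion, Finset.union_union_union_comm]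
    exact Finset.union_subset_union hJ hK
  linarith [certBound_union (S' := S') (T' := T') hz hS hT,
    certBound_le_coverSup (z := z) (Finset.union_subset hS hS') (Finset.union_subset hT hT') hcov]

lemma mcSys_coverSup (hz : StdLin G z) {f J K : Finset α} (hf : J ∪ K = f) :
    McSys (coverSup G z J) (coverSup G z K) (coverSup G z f) := by
  subst hf
  exact ⟨coverSup_nonneg _, coverSup_add_sub_one_le hz J K,
    coverSup_anti Finset.subset_union_left, coverSup_anti Finset.subset_union_right⟩

lemma coverSup_of_mem_edges (hz : MPEF G z) {e : Finset α} (he : e ∈ G.E) :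
    coverSup G z e = z e := by
  refine le_antisymm (coverSup_le (hz.1.2 e he).1 fun S T hS hT hcov =>
    certBound_le_of_subset_cover hz he hS hT hcov) ?_
  simpa using certBound_le_coverSup (z := z) (Finset.empty_subset G.V)
    (Finset.singleton_subset_iff.mpr he) (by simp)

lemma coverSup_singleton (hz : StdLin G z) {e : Finset α} {v : α} (he : e ∈ G.E)
    (hv : v ∈ e) : coverSup G z {v} = z {v} := by
  have hvV : v ∈ G.V := G.edge_sub e he hv
  refine le_antisymm (coverSup_le ((hz.2 e he).1.trans ((hz.2 e he).2.2 v hv))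
    fun S T hS hT hcov => ?_) ?_
  · rcases Finset.mem_union.mp (hcov (Finset.mem_singleton_self v)) with hvS | hvT
    · simpa using certBound_anti hz hS hT (Finset.singleton_subset_iff.mpr hvS)
        (Finset.empty_subset T)
    · obtain ⟨i, hi, hvi⟩ := Finset.mem_biUnion.mp hvT
      have hbi := certBound_anti hz hS hT (Finset.empty_subset S)
        (Finset.singleton_subset_iff.mpr hi)
      rw [certBound_empty_singleton] at hbi
      exact hbi.trans ((hz.2 i (hT hi)).2.2 v hvi)
  · simpa using certBound_le_coverSup (z := z) (Finset.singleton_subset_iff.mpr hvV)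
      (Finset.empty_subset G.E) (by simp)

end CoverSup

section Extension

variable {α : Type*} [DecidableEq α] {G : Hypergraph' α} {z : Finset α → ℝ}

def coverExtension (G : Hypergraph' α) (z : Finset α → ℝ) (g : Finset α) : ℝ :=
  if g ∈ G.E ∨ g.card ≤ 1 then z g else coverSup G z g

lemma coverExtension_singleton (v : α) : coverExtension G z {v} = z {v} :=
  if_pos (Or.inr (Finset.card_singleton v).le)

lemma coverExtension_of_mem_edges {e : Finset α} (he : e ∈ G.E) :
    coverExtension G z e = z e :=
  if_pos (Or.inl he)

lemma coverExtension_eq_coverSup (hz : MPEF G z) {g e : Finset α} (hg : g.Nonempty)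
    (he : e ∈ G.E) (hge : g ⊆ e) : coverExtension G z g = coverSup G z g := by
  by_cases hgE : g ∈ G.E
  · rw [coverExtension_of_mem_edges hgE, coverSup_of_mem_edges hz hgE]
  by_cases hg1 : g.card ≤ 1
  · obtain ⟨v, rfl⟩ := Finset.card_eq_one.mp (le_antisymm hg1 hg.card_pos)
    rw [coverExtension_singleton, coverSup_singleton hz.1 he (Finset.singleton_subset_iff.mp hge)]
  · exact if_neg (not_or.mpr ⟨hgE, hg1⟩)

end Extension

namespace RMC

variable {α : Type*} [DecidableEq α] {G : Hypergraph' α} (M : RMC G)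

lemma J_subset {f : Finset α} (hf : f ∈ G.E ∪ M.Ebar) : M.J f ⊆ f :=
  Finset.subset_union_left.trans (M.union_eq f hf).le

lemma K_subset {f : Finset α} (hf : f ∈ G.E ∪ M.Ebar) : M.K f ⊆ f :=
  Finset.subset_union_right.trans (M.union_eq f hf).le

lemma subset_of_step {a b : Finset α} (h : M.step a b) : b ⊆ a := by
  obtain ⟨ha, -, rfl | rfl⟩ := h
  exacts [M.J_subset ha, M.K_subset ha]

lemma subset_of_reflTransGen {a b : Finset α} (h : Relation.ReflTransGen M.step a b) :
    b ⊆ a := by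
  induction h with
  | refl => exact subset_rfl
  | tail _ hbc ih => exact (M.subset_of_step hbc).trans ih

lemma exists_edge_superset {f : Finset α} (hf : f ∈ G.E ∪ M.Ebar) :
    ∃ e ∈ G.E, f ⊆ e := by
  rcases Finset.mem_union.mp hf with hfE | hfE
  · exact ⟨f, hfE, subset_rfl⟩
  · obtain ⟨e, he, hef⟩ := M.reach f hfE
    exact ⟨e, he, M.subset_of_reflTransGen hef⟩

end RMC

/-- Proposition 2: the extended flower relaxation implies every recursive
McCormick relaxation: `MP^EF_G ⊆ MP^RMC_G`. -/
theorem MPEF_subset_MPRMC {α : Type*} [DecidableEq α]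
    (G : Hypergraph' α) (M : RMC G) (z : Finset α → ℝ) (hz : MPEF G z) :
    M.MPRMC z := by
  refine ⟨coverExtension G z, fun v _ => coverExtension_singleton v,
    fun e he => coverExtension_of_mem_edges he, fun f hf => ?_⟩
  obtain ⟨e, he, hfe⟩ := M.exists_edge_superset hf
  have hext : ∀ g ⊆ f, g.Nonempty → coverExtension G z g = coverSup G z g :=
    fun g hgf hg => coverExtension_eq_coverSup hz hg he (hgf.trans hfe)
  change McSys (coverExtension G z (M.J f)) (coverExtension G z (M.K f)) (coverExtension G z f)
  rw [hext _ (M.J_subset hf) (M.J_ne f hf), hext _ (M.K_subset hf) (M.K_ne f hf),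
    hext f subset_rfl ((M.J_ne f hf).mono (M.J_subset hf))]
  exact mcSys_coverSup hz.1 (M.union_eq f hf)
end
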